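/- Let ω ∈ 𝓑'₀ have power series expansion ω(z) = c₁z + c₂z² + c₃z³ + ⋯ on 𝔻, let μ ∈ ℂ, and suppose 1/(1 + (3/4)|μ|) ≤ |c₁| ≤ 1. Then |c₃ − μc₁c₂| ≤ (1/3 + (1/2)|μ|)·|c₁|·(1 − |c₁|²). -/

import Mathlib

/-!
`f = ω'` maps the unit disc into the closed unit disc and `f = c₁ + 2c₂z + 3c₃z² + ⋯`.
Schwarz–Pick at the origin, applied to `f` and to its Schur transform
`(f - f 0) / (z (1 - conj (f 0) f))`, gives Schur's inequalities
`2|c₂| ≤ 1 - |c₁|²` and `|3c₃(1 - |c₁|²) + 4 c̄₁ c₂²| ≤ (1 - |c₁|²)² - 4|c₂|²`.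
With the triangle inequality these bound `|c₃ - μc₁c₂|` by a concave quadratic in `|c₂|`;
the hypothesis on `|c₁|` puts its vertex beyond `(1 - |c₁|²)/2`, so the bound is largest at that
endpoint, where it equals the right-hand side. If `|c₁| = 1`, `f` is constant by the maximum
principle and `c₂ = c₃ = 0`.
-/

open Complex Metric Set Filter Topology ComplexConjugate

theorem iteratedDeriv_eq_factorial_mul_of_hasSum {𝕜 : Type*} [NontriviallyNormedField 𝕜]
    [CompleteSpace 𝕜] {f : 𝕜 → 𝕜} {a : ℕ → 𝕜} {r : ℝ} (hr : 0 < r)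
    (hf : ∀ z ∈ ball (0 : 𝕜) r, HasSum (fun n ↦ a n * z ^ n) (f z)) (n : ℕ) :
    iteratedDeriv n f 0 = n.factorial * a n := by
  obtain ⟨x, hx0, hxr⟩ := NormedField.exists_norm_lt 𝕜 hr
  have hp : HasFPowerSeriesOnBall f (FormalMultilinearSeries.ofScalars 𝕜 a) 0 ‖x‖₊ := by
    refine ⟨?_, by simpa using hx0, fun {y} hy ↦ ?_⟩
    · apply FormalMultilinearSeries.le_radius_of_tendsto (l := 0)
      simpa [FormalMultilinearSeries.ofScalars_norm] using
        (hf x (by simpa using hxr)).summable.tendsto_atTop_zero.norm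
    · have hy' : ‖y‖ < r := by
        rw [Metric.eball_coe, mem_ball_zero_iff] at hy
        exact hy.trans hxr
      simpa [FormalMultilinearSeries.ofScalars_apply_eq, mul_comm] using hf y (by simpa using hy')
  rw [iteratedDeriv_eq_iteratedFDeriv, ← hp.factorial_smul 1 n]
  simp

theorem iteratedDeriv_deriv_eq_of_hasSum {ω : ℂ → ℂ} {c : ℕ → ℂ}
    (hc : ∀ z ∈ ball (0 : ℂ) 1, HasSum (fun n ↦ c (n + 1) * z ^ (n + 1)) (ω z)) (n : ℕ) :
    iteratedDeriv n (deriv ω) 0 = (n + 1).factorial * c (n + 1) := by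
  have hsum : ∀ z ∈ ball (0 : ℂ) 1, HasSum (fun n ↦ Function.update c 0 0 n * z ^ n) (ω z) :=
    fun z hz ↦ (hasSum_nat_add_iff' 1).1 (by simpa using hc z hz)
  rw [← iteratedDeriv_succ', iteratedDeriv_eq_factorial_mul_of_hasSum one_pos hsum,
    Function.update_of_ne n.succ_ne_zero]

theorem two_smul_deriv_dslope_same {E : Type*} [NormedAddCommGroup E] [NormedSpace ℂ E]
    [CompleteSpace E] {f : ℂ → E} {s : Set ℂ} {a : ℂ}
    (hf : DifferentiableOn ℂ f s) (hs : IsOpen s) (ha : a ∈ s) :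
    (2 : ℂ) • deriv (dslope f a) a = iteratedDeriv 2 f a := by
  set q := dslope f a
  have hq : DifferentiableOn ℂ q s := (Complex.differentiableOn_dslope (hs.mem_nhds ha)).2 hf
  have hfq : f = fun z ↦ f a + (z - a) • q z := funext fun z ↦ by simp [q]
  have hq0 : ∀ z ∈ s, HasDerivAt q (deriv q z) z :=
    fun z hz ↦ (hq.differentiableAt (hs.mem_nhds hz)).hasDerivAt
  have hderiv : deriv f =ᶠ[𝓝 a] fun z ↦ (z - a) • deriv q z + q z := by
    filter_upwards [hs.mem_nhds ha] with z hz
    rw [hfq]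
    simpa using ((((hasDerivAt_id' z).sub_const a).smul (hq0 z hz)).const_add (f a)).deriv
  have hq' : DifferentiableAt ℂ (deriv q) a := (hq.deriv hs).differentiableAt (hs.mem_nhds ha)
  have hd2 : HasDerivAt (fun z ↦ (z - a) • deriv q z + q z)
      ((a - a) • deriv (deriv q) a + (1 : ℂ) • deriv q a + deriv q a) a :=
    (((hasDerivAt_id' a).sub_const a).smul hq'.hasDerivAt).add (hq0 a ha)
  rw [iteratedDeriv_succ, iteratedDeriv_one, hderiv.deriv_eq, hd2.deriv]
  simp [two_smul]

theorem norm_one_sub_conj_mul_sq (a w : ℂ) :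
    ‖1 - conj a * w‖ ^ 2 = ‖w - a‖ ^ 2 + (1 - ‖a‖ ^ 2) * (1 - ‖w‖ ^ 2) := by
  simp only [Complex.sq_norm, normSq_apply, sub_re, sub_im, mul_re, mul_im, conj_re, conj_im,
    one_re, one_im]
  ring

theorem norm_sub_le_norm_one_sub_conj_mul {a w : ℂ} (ha : ‖a‖ ≤ 1) (hw : ‖w‖ ≤ 1) :
    ‖w - a‖ ≤ ‖1 - conj a * w‖ := by
  have : 0 ≤ (1 - ‖a‖ ^ 2) * (1 - ‖w‖ ^ 2) :=
    mul_nonneg (by nlinarith [norm_nonneg a]) (by nlinarith [norm_nonneg w])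
  refine (pow_le_pow_iff_left₀ (norm_nonneg _) (norm_nonneg _) two_ne_zero).1 ?_
  rw [norm_one_sub_conj_mul_sq]
  linarith

theorem one_sub_conj_mul_ne_zero {a w : ℂ} (ha : ‖a‖ < 1) (hw : ‖w‖ ≤ 1) :
    1 - conj a * w ≠ 0 := by
  rw [sub_ne_zero]
  intro h
  have := congrArg norm h
  rw [norm_mul, norm_conj, norm_one] at this
  nlinarith [norm_nonneg a, norm_nonneg w]

theorem norm_one_sub_norm_sq {a : ℂ} (ha : ‖a‖ ≤ 1) : ‖1 - (‖a‖ : ℂ) ^ 2‖ = 1 - ‖a‖ ^ 2 := by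
  rw [← ofReal_pow, ← ofReal_one, ← ofReal_sub, norm_real, Real.norm_of_nonneg]
  nlinarith [norm_nonneg a]

/-- The first step of Schur's algorithm, `z ↦ (F z - F 0) / (z (1 - conj (F 0) F z))`, with the
removable singularity at `0` filled in by `dslope`. -/
noncomputable def schurTransform (F : ℂ → ℂ) (z : ℂ) : ℂ :=
  dslope F 0 z / (1 - conj (F 0) * F z)

theorem mul_schurTransform (F : ℂ → ℂ) (z : ℂ) :
    z * schurTransform F z = (F z - F 0) / (1 - conj (F 0) * F z) := by
  rw [schurTransform, ← mul_div_assoc]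
  simpa using congrArg (· / (1 - conj (F 0) * F z)) (sub_smul_dslope F 0 z)

theorem schurTransform_zero (F : ℂ → ℂ) :
    schurTransform F 0 = deriv F 0 / (1 - (‖F 0‖ : ℂ) ^ 2) := by
  rw [schurTransform, dslope_same, conj_mul']

section Schur

variable {F : ℂ → ℂ}

theorem differentiableOn_schurTransform (hF : DifferentiableOn ℂ F (ball 0 1))
    (hF1 : MapsTo F (ball 0 1) (closedBall 0 1)) (h0 : ‖F 0‖ < 1) :
    DifferentiableOn ℂ (schurTransform F) (ball 0 1) :=
  ((Complex.differentiableOn_dslope (isOpen_ball.mem_nhds (mem_ball_self one_pos))).2 hF).div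
    ((differentiableOn_const 1).sub ((differentiableOn_const _).mul hF))
    fun z hz ↦ one_sub_conj_mul_ne_zero h0 (by simpa using hF1 hz)

theorem mapsTo_schurTransform (hF : DifferentiableOn ℂ F (ball 0 1))
    (hF1 : MapsTo F (ball 0 1) (closedBall 0 1)) (h0 : ‖F 0‖ < 1) :
    MapsTo (schurTransform F) (ball 0 1) (closedBall 0 1) := by
  have hS := differentiableOn_schurTransform hF hF1 h0
  set g : ℂ → ℂ := fun z ↦ z * schurTransform F z
  have hg : DifferentiableOn ℂ g (ball 0 1) := differentiableOn_id.mul hS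
  have hg1 : MapsTo g (ball 0 1) (closedBall (g 0) 1) := fun z hz ↦ by
    have hz1 : ‖F z‖ ≤ 1 := by simpa using hF1 hz
    rw [show g 0 = 0 from zero_mul _, mem_closedBall_zero_iff,
      show g z = _ from mul_schurTransform F z, norm_div]
    exact div_le_one_of_le₀ (norm_sub_le_norm_one_sub_conj_mul h0.le hz1) (norm_nonneg _)
  intro z hz
  have hgs : dslope g 0 z = schurTransform F z := by
    rcases eq_or_ne z 0 with rfl | hz0
    · have hg0 : HasDerivAt g (1 * schurTransform F 0 + 0 * deriv (schurTransform F) 0) 0 :=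
        (hasDerivAt_id' 0).mul (hS.differentiableAt (isOpen_ball.mem_nhds hz)).hasDerivAt
      rw [dslope_same, hg0.deriv]
      ring
    · rw [dslope_of_ne _ hz0, slope_def_field]
      simp [g, hz0]
  simpa [hgs] using Complex.norm_dslope_le_div_of_mapsTo_ball hg hg1 hz

theorem deriv_schurTransform_zero (hF : DifferentiableOn ℂ F (ball 0 1)) (h0 : ‖F 0‖ ≠ 1) :
    deriv (schurTransform F) 0 =
      (iteratedDeriv 2 F 0 / 2 * (1 - (‖F 0‖ : ℂ) ^ 2) + conj (F 0) * deriv F 0 ^ 2) /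
        (1 - (‖F 0‖ : ℂ) ^ 2) ^ 2 := by
  have h0m : (0 : ℂ) ∈ ball 0 1 := mem_ball_self one_pos
  have hβ : (1 : ℂ) - (‖F 0‖ : ℂ) ^ 2 ≠ 0 := by
    rw [sub_ne_zero, ne_comm]
    exact_mod_cast (pow_eq_one_iff_of_nonneg (norm_nonneg _) two_ne_zero).not.2 h0
  have hq := ((Complex.differentiableOn_dslope (isOpen_ball.mem_nhds h0m)).2 hF).differentiableAt
    (isOpen_ball.mem_nhds h0m)
  have hFd := (hF.differentiableAt (isOpen_ball.mem_nhds h0m)).hasDerivAt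
  have hq' : deriv (dslope F 0) 0 = iteratedDeriv 2 F 0 / 2 := by
    rw [← two_smul_deriv_dslope_same hF isOpen_ball h0m, smul_eq_mul]
    ring
  have hd : HasDerivAt (schurTransform F)
      ((deriv (dslope F 0) 0 * (1 - conj (F 0) * F 0) -
          dslope F 0 0 * (0 - conj (F 0) * deriv F 0)) / (1 - conj (F 0) * F 0) ^ 2) 0 :=
    hq.hasDerivAt.div ((hasDerivAt_const 0 (1 : ℂ)).sub (hFd.const_mul (conj (F 0))))
      (by rwa [conj_mul'])
  rw [hd.deriv, hq', dslope_same, conj_mul']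
  field_simp
  ring

theorem eventuallyEq_const_of_norm_eq_one (hF : DifferentiableOn ℂ F (ball 0 1))
    (hF1 : MapsTo F (ball 0 1) (closedBall 0 1)) (h0 : ‖F 0‖ = 1) :
    F =ᶠ[𝓝 0] fun _ ↦ F 0 := by
  have h0m : (0 : ℂ) ∈ ball 0 1 := mem_ball_self one_pos
  have hmax : IsMaxOn (norm ∘ F) (ball 0 1) 0 := fun z hz ↦ by
    simpa [h0] using hF1 hz
  exact eventuallyEq_of_mem (isOpen_ball.mem_nhds h0m)
    (Complex.eqOn_of_isPreconnected_of_isMaxOn_norm (convex_ball 0 1).isPreconnected isOpen_ball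
      hF h0m hmax)

theorem iteratedDeriv_eq_zero_of_norm_eq_one (hF : DifferentiableOn ℂ F (ball 0 1))
    (hF1 : MapsTo F (ball 0 1) (closedBall 0 1)) (h0 : ‖F 0‖ = 1) {n : ℕ} (hn : n ≠ 0) :
    iteratedDeriv n F 0 = 0 := by
  rw [(eventuallyEq_const_of_norm_eq_one hF hF1 h0).iteratedDeriv_eq, iteratedDeriv_const,
    if_neg hn]

theorem norm_deriv_le_one_sub_sq (hF : DifferentiableOn ℂ F (ball 0 1))
    (hF1 : MapsTo F (ball 0 1) (closedBall 0 1)) :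
    ‖deriv F 0‖ ≤ 1 - ‖F 0‖ ^ 2 := by
  have h0 : ‖F 0‖ ≤ 1 := by simpa using hF1 (mem_ball_self one_pos)
  rcases h0.eq_or_lt with h0 | h0
  · rw [← iteratedDeriv_one, iteratedDeriv_eq_zero_of_norm_eq_one hF hF1 h0 one_ne_zero, h0]
    norm_num
  · have hβ : 0 < 1 - ‖F 0‖ ^ 2 := by nlinarith [norm_nonneg (F 0)]
    have h := mapsTo_schurTransform hF hF1 h0 (mem_ball_self one_pos)
    rwa [mem_closedBall_zero_iff, schurTransform_zero, norm_div, norm_one_sub_norm_sq h0.le,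
      div_le_one₀ hβ] at h

theorem schur_second_coeff_le (hF : DifferentiableOn ℂ F (ball 0 1))
    (hF1 : MapsTo F (ball 0 1) (closedBall 0 1)) (h0 : ‖F 0‖ < 1) :
    ‖iteratedDeriv 2 F 0 / 2 * (1 - (‖F 0‖ : ℂ) ^ 2) + conj (F 0) * deriv F 0 ^ 2‖ ≤
      (1 - ‖F 0‖ ^ 2) ^ 2 - ‖deriv F 0‖ ^ 2 := by
  have h := norm_deriv_le_one_sub_sq (differentiableOn_schurTransform hF hF1 h0)
    (mapsTo_schurTransform hF hF1 h0)
  have hβ : 0 < 1 - ‖F 0‖ ^ 2 := by nlinarith [norm_nonneg (F 0)]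
  rw [deriv_schurTransform_zero hF h0.ne, schurTransform_zero, norm_div, norm_div, norm_pow,
    norm_one_sub_norm_sq h0.le, div_pow, div_le_iff₀ (by positivity)] at h
  calc _ ≤ (1 - (‖deriv F 0‖ ^ 2 / (1 - ‖F 0‖ ^ 2) ^ 2)) * (1 - ‖F 0‖ ^ 2) ^ 2 := h
    _ = _ := by field_simp

end Schur

theorem fekete_szego_real_bound {t m x y : ℝ} (ht : 0 < t) (ht1 : t < 1)
    (htm : 1 ≤ t * (1 + 3 / 4 * m)) (hx : 2 * x ≤ 1 - t ^ 2)
    (hy : 3 * y * (1 - t ^ 2) ≤ (1 - t ^ 2) ^ 2 - 4 * (1 - t) * x ^ 2) :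
    y + m * t * x ≤ (1 / 3 + 1 / 2 * m) * t * (1 - t ^ 2) := by
  -- With `s = 1 - t² - 2x`, the gap is `s (m t / 2 - 2 (1 - t) / 3) + s² / (3 (1 + t))`.
  have hs : 0 ≤ 1 - t ^ 2 - 2 * x := by linarith
  have hk : 0 ≤ m * t / 2 - 2 * (1 - t) / 3 := by linarith
  have hβ : 0 < 1 - t ^ 2 := by nlinarith
  have key : 3 * (1 - t ^ 2) * (y + m * t * x) ≤
      3 * (1 - t ^ 2) * ((1 / 3 + 1 / 2 * m) * t * (1 - t ^ 2)) := by
    nlinarith [mul_nonneg hs hk, mul_nonneg hs hs,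
      mul_nonneg (mul_nonneg hs hk) (by linarith : (0 : ℝ) ≤ 1 + t)]
  exact le_of_mul_le_mul_left key (by linarith)

theorem norm_sub_mul_le_of_schur {c₁ c₂ c₃ μ : ℂ} (ht : ‖c₁‖ < 1)
    (h1 : 1 / (1 + 3 / 4 * ‖μ‖) ≤ ‖c₁‖) (hSP : ‖2 * c₂‖ ≤ 1 - ‖c₁‖ ^ 2)
    (hS : ‖3 * c₃ * (1 - (‖c₁‖ : ℂ) ^ 2) + conj c₁ * (2 * c₂) ^ 2‖ ≤
      (1 - ‖c₁‖ ^ 2) ^ 2 - ‖2 * c₂‖ ^ 2) :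
    ‖c₃ - μ * c₁ * c₂‖ ≤ (1 / 3 + 1 / 2 * ‖μ‖) * ‖c₁‖ * (1 - ‖c₁‖ ^ 2) := by
  have hy : 3 * ‖c₃‖ * (1 - ‖c₁‖ ^ 2) ≤ (1 - ‖c₁‖ ^ 2) ^ 2 - 4 * (1 - ‖c₁‖) * ‖c₂‖ ^ 2 := by
    have := norm_sub_le (3 * c₃ * (1 - (‖c₁‖ : ℂ) ^ 2) + conj c₁ * (2 * c₂) ^ 2)
      (conj c₁ * (2 * c₂) ^ 2)
    rw [add_sub_cancel_right] at this
    simp only [norm_mul, norm_pow, norm_conj, norm_one_sub_norm_sq ht.le, Complex.norm_ofNat]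
      at this hS
    linear_combination this + hS
  have htri : ‖c₃ - μ * c₁ * c₂‖ ≤ ‖c₃‖ + ‖μ‖ * ‖c₁‖ * ‖c₂‖ := by
    simpa [norm_mul] using norm_sub_le c₃ (μ * c₁ * c₂)
  have hpos : 0 < 1 / (1 + 3 / 4 * ‖μ‖) := by positivity
  have htm : 1 ≤ ‖c₁‖ * (1 + 3 / 4 * ‖μ‖) := by rwa [div_le_iff₀ (by positivity)] at h1
  have := fekete_szego_real_bound (hpos.trans_le h1) ht htm (by simpa [norm_mul] using hSP) hy
  linarith

theorem stmt_10_general (ω : ℂ → ℂ) (c : ℕ → ℂ) (μ : ℂ)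
    (hd : DifferentiableOn ℂ ω (ball 0 1))
    (hb : ∀ z ∈ ball (0:ℂ) 1, ‖deriv ω z‖ ≤ 1)
    (hc : ∀ z ∈ ball (0:ℂ) 1, HasSum (fun n : ℕ => c (n + 1) * z ^ (n + 1)) (ω z))
    (h1 : 1 / (1 + (3/4) * ‖μ‖) ≤ ‖c 1‖)
    (h2 : ‖c 1‖ ≤ 1) :
    ‖c 3 - μ * c 1 * c 2‖ ≤ (1/3 + (1/2) * ‖μ‖) * ‖c 1‖ * (1 - ‖c 1‖^2) := by
  set f := deriv ω
  have hf : DifferentiableOn ℂ f (ball 0 1) := hd.deriv isOpen_ball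
  have hf1 : MapsTo f (ball 0 1) (closedBall 0 1) := fun z hz ↦ by simpa using hb z hz
  have hf0 : f 0 = c 1 := by simpa using iteratedDeriv_deriv_eq_of_hasSum hc 0
  have hf1' : deriv f 0 = 2 * c 2 := by
    simpa [Nat.factorial] using iteratedDeriv_deriv_eq_of_hasSum hc 1
  have hf2 : iteratedDeriv 2 f 0 / 2 = 3 * c 3 := by
    rw [iteratedDeriv_deriv_eq_of_hasSum hc 2]
    norm_num [Nat.factorial]
    ring
  rcases h2.eq_or_lt with ht | ht
  · have hc2 : c 2 = 0 := by
      simpa [hf1'] using iteratedDeriv_eq_zero_of_norm_eq_one hf hf1 (hf0 ▸ ht) one_ne_zero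
    have hc3 : c 3 = 0 := by
      have h3 : 3 * c 3 = 0 := by
        rw [← hf2, iteratedDeriv_eq_zero_of_norm_eq_one hf hf1 (hf0 ▸ ht) two_ne_zero, zero_div]
      simpa using h3
    simp [hc2, hc3, ht]
  have hS := schur_second_coeff_le hf hf1 (hf0 ▸ ht)
  rw [hf0, hf1', hf2] at hS
  have hSP := norm_deriv_le_one_sub_sq hf hf1
  rw [hf0, hf1'] at hSP
  exact norm_sub_mul_le_of_schur ht h1 hSP hS

theorem stmt_10 (ω : ℂ → ℂ) (c : ℕ → ℂ) (μ : ℂ)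
    (hd : DifferentiableOn ℂ ω (ball 0 1))
    (h0 : ω 0 = 0)
    (hb : ∀ z ∈ ball (0:ℂ) 1, ‖deriv ω z‖ ≤ 1)
    (hc : ∀ z ∈ ball (0:ℂ) 1, HasSum (fun n : ℕ => c (n + 1) * z ^ (n + 1)) (ω z))
    (h1 : 1 / (1 + (3/4) * ‖μ‖) ≤ ‖c 1‖)
    (h2 : ‖c 1‖ ≤ 1) :
    ‖c 3 - μ * c 1 * c 2‖ ≤ (1/3 + (1/2) * ‖μ‖) * ‖c 1‖ * (1 - ‖c 1‖^2) :=
  stmt_10_general ω c μ hd hb hc h1 h2
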